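/- arXiv:2510.10408 — 5 statements merged into one kernel-verified Lean document; each statement's English description precedes it below -/
import Mathlib

section
/- Let V be a real vector space and let B₁, B₂ : V × V → ℝ be symmetric positive semidefinite bilinear forms. Suppose u₁, u₂ ∈ V satisfy B₁(u₁,u₁) = B₁(u₁,u₂) and B₂(u₂,u₂) = B₂(u₂,u₁). Then B₁(u₁,u₁) − B₂(u₁,u₁) ≤ B₁(u₁,u₁) − B₂(u₂,u₂) ≤ B₁(u₂,u₂) − B₂(u₂,u₂). -/
theorem LinearMap.apply_self_le_apply_self_of_apply_self_eq {R M : Type*} [CommRing R]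
    [PartialOrder R] [IsOrderedAddMonoid R] [AddCommGroup M] [Module R M]
    (B : M →ₗ[R] M →ₗ[R] R) (hsymm : ∀ w w' : M, B w w' = B w' w)
    (hpsd : ∀ w : M, 0 ≤ B w w) {u v : M} (h : B v v = B v u) :
    B v v ≤ B u u := by
  have hexpand : B (u - v) (u - v) = B u u - B v v := by
    simp only [map_sub, LinearMap.sub_apply, hsymm u v, ← h]
    abel
  exact sub_nonneg.mp (hexpand ▸ hpsd (u - v))

/-- Abstract two-sided monotonicity relation for two symmetric positive
semidefinite bilinear forms. -/
theorem stmt_1 {V : Type*} [AddCommGroup V] [Module ℝ V]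
    (B₁ B₂ : V →ₗ[ℝ] V →ₗ[ℝ] ℝ)
    (hsymm₁ : ∀ w w' : V, B₁ w w' = B₁ w' w)
    (hsymm₂ : ∀ w w' : V, B₂ w w' = B₂ w' w)
    (hpsd₁ : ∀ w : V, 0 ≤ B₁ w w)
    (hpsd₂ : ∀ w : V, 0 ≤ B₂ w w)
    (u₁ u₂ : V)
    (h₁ : B₁ u₁ u₁ = B₁ u₁ u₂)
    (h₂ : B₂ u₂ u₂ = B₂ u₂ u₁) :
    B₁ u₁ u₁ - B₂ u₁ u₁ ≤ B₁ u₁ u₁ - B₂ u₂ u₂ ∧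
      B₁ u₁ u₁ - B₂ u₂ u₂ ≤ B₁ u₂ u₂ - B₂ u₂ u₂ :=
  ⟨sub_le_sub_left (B₂.apply_self_le_apply_self_of_apply_self_eq hsymm₂ hpsd₂ h₂) _,
    sub_le_sub_right (B₁.apply_self_le_apply_self_of_apply_self_eq hsymm₁ hpsd₁ h₁) _⟩
end

section
/- Let n ≥ 1, 0 < s < 1, λ ∈ (0,1), and let Ω ⊂ ℝⁿ be a bounded open set. Let σ₁, σ₂ : ℝⁿ → ℝ be measurable with λ ≤ σⱼ(x) ≤ λ⁻¹ for all x and σ₁ = σ₂ on ℝⁿ∖Ω. Let ũ₁, ũ₂ : ℝⁿ×(0,∞) → ℝ be differentiable with y^{1−2s}|∇_{x,y}ũⱼ(x,y)|² integrable over ℝⁿ×(0,∞) for j = 1,2, and define B_σ(w,w') := ∫_{ℝⁿ×(0,∞)} y^{1−2s} ( σ(x)·∇_x w(x,y)·∇_x w'(x,y) + ∂_y w(x,y)·∂_y w'(x,y) ) dx dy. If B_{σ₁}(ũ₁, ũ₁ − ũ₂) = 0 and B_{σ₂}(ũ₂, ũ₂ − ũ₁) = 0, then ∫_{Ω×(0,∞)}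 y^{1−2s} (σ₁(x) − σ₂(x)) |∇_x ũ₁(x,y)|² dx dy ≤ B_{σ₁}(ũ₁,ũ₁) − B_{σ₂}(ũ₂,ũ₂) ≤ ∫_{Ω×(0,∞)} y^{1−2s} (σ₁(x) − σ₂(x)) |∇_x ũ₂(x,y)|² dx dy. -/
open MeasureTheory
open scoped RealInnerProductSpace

variable {n : ℕ}

local notation "E" => EuclideanSpace ℝ (Fin n)

lemma aux_grad_eq {u : E × ℝ → ℝ} (hu : Differentiable ℝ u) (p : E × ℝ) :
    gradient (fun x => u (x, p.2)) p.1 =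
      (InnerProductSpace.toDual ℝ E).symm
        ((fderiv ℝ u p).comp (ContinuousLinearMap.inl ℝ E ℝ)) := by
  have h : HasFDerivAt (fun x => u (x, p.2))
      ((fderiv ℝ u p).comp (ContinuousLinearMap.inl ℝ E ℝ)) p.1 := by
    have := HasFDerivAt.comp (f := fun e => (e, p.2)) p.1 (hu (p.1, p.2)).hasFDerivAt
      (hasFDerivAt_prodMk_left (𝕜 := ℝ) p.1 p.2)
    exact this
  rw [gradient, h.fderiv]

lemma aux_deriv_eq {u : E × ℝ → ℝ} (hu : Differentiable ℝ u) (p : E × ℝ) :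
    deriv (fun y => u (p.1, y)) p.2 = fderiv ℝ u p (0, 1) := by
  have h : HasFDerivAt (fun y => u (p.1, y))
      ((fderiv ℝ u p).comp (ContinuousLinearMap.inr ℝ E ℝ)) p.2 := by
    have := (hu (p.1, p.2)).hasFDerivAt.comp p.2 (hasFDerivAt_prodMk_right p.1 p.2)
    exact this
  have := h.hasDerivAt.deriv
  simpa using this

lemma aux_meas_grad {u : E × ℝ → ℝ} (hu : Differentiable ℝ u) :
    Measurable (fun p : E × ℝ => gradient (fun x => u (x, p.2)) p.1) := by
  have h1 : Measurable (fderiv ℝ u) := measurable_fderiv ℝ u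
  have h2 : Continuous fun L : (E × ℝ) →L[ℝ] ℝ =>
      (InnerProductSpace.toDual ℝ E).symm (L.comp (ContinuousLinearMap.inl ℝ E ℝ)) :=
    (InnerProductSpace.toDual ℝ E).symm.continuous.comp
      (continuous_id.clm_comp continuous_const)
  simp_rw [aux_grad_eq hu]
  exact h2.measurable.comp h1

lemma aux_meas_deriv {u : E × ℝ → ℝ} (hu : Differentiable ℝ u) :
    Measurable (fun p : E × ℝ => deriv (fun y => u (p.1, y)) p.2) := by
  simp_rw [aux_deriv_eq hu]
  exact measurable_fderiv_apply_const ℝ u (0, 1)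

lemma aux_grad_sub {u v : E × ℝ → ℝ} (hu : Differentiable ℝ u) (hv : Differentiable ℝ v)
    (p : E × ℝ) :
    gradient (fun x => (u - v) (x, p.2)) p.1 =
      gradient (fun x => u (x, p.2)) p.1 - gradient (fun x => v (x, p.2)) p.1 := by
  rw [aux_grad_eq (u := u - v) (hu.sub hv), aux_grad_eq hu, aux_grad_eq hv]
  have : fderiv ℝ (u - v) p = fderiv ℝ u p - fderiv ℝ v p := fderiv_sub (hu p) (hv p)
  rw [this, ContinuousLinearMap.sub_comp, map_sub]

lemma aux_deriv_sub {u v : E × ℝ → ℝ} (hu : Differentiable ℝ u) (hv : Differentiable ℝ v)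
    (p : E × ℝ) :
    deriv (fun y => (u - v) (p.1, y)) p.2 =
      deriv (fun y => u (p.1, y)) p.2 - deriv (fun y => v (p.1, y)) p.2 := by
  rw [aux_deriv_eq (u := u - v) (hu.sub hv), aux_deriv_eq hu, aux_deriv_eq hv]
  have : fderiv ℝ (u - v) p = fderiv ℝ u p - fderiv ℝ v p := fderiv_sub (hu p) (hv p)
  rw [this]; simp

lemma aux_integrable {s lam : ℝ} (hlam0 : 0 < lam) (h1lam : 1 ≤ lam⁻¹)
    {σ : E → ℝ} (hσm : Measurable σ) (hσb : ∀ x, |σ x| ≤ lam⁻¹)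
    {u v : E × ℝ → ℝ} (hu : Differentiable ℝ u) (hv : Differentiable ℝ v)
    (hintu : IntegrableOn (fun p : E × ℝ =>
        p.2 ^ (1 - 2 * s) *
          (‖gradient (fun x => u (x, p.2)) p.1‖ ^ 2 + (deriv (fun y => u (p.1, y)) p.2) ^ 2))
      (Set.univ ×ˢ Set.Ioi (0 : ℝ)))
    (hintv : IntegrableOn (fun p : E × ℝ =>
        p.2 ^ (1 - 2 * s) *
          (‖gradient (fun x => v (x, p.2)) p.1‖ ^ 2 + (deriv (fun y => v (p.1, y)) p.2) ^ 2))
      (Set.univ ×ˢ Set.Ioi (0 : ℝ))) :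
    IntegrableOn (fun p : E × ℝ =>
        p.2 ^ (1 - 2 * s) *
          (σ p.1 * ⟪gradient (fun x => u (x, p.2)) p.1, gradient (fun x => v (x, p.2)) p.1⟫ +
            deriv (fun y => u (p.1, y)) p.2 * deriv (fun y => v (p.1, y)) p.2))
      (Set.univ ×ˢ Set.Ioi (0 : ℝ)) := by
  have hS : MeasurableSet (Set.univ ×ˢ Set.Ioi (0 : ℝ) : Set (E × ℝ)) :=
    MeasurableSet.univ.prod measurableSet_Ioi
  have hA : AEMeasurable (fun p : E × ℝ => p.2 ^ (1 - 2 * s))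
      (volume.restrict (Set.univ ×ˢ Set.Ioi (0 : ℝ))) := by
    apply ContinuousOn.aemeasurable ?_ hS
    intro p hp
    exact ((Real.continuousAt_rpow_const p.2 _ (Or.inl (ne_of_gt hp.2))).comp
      continuous_snd.continuousAt).continuousWithinAt
  have hrest : Measurable (fun p : E × ℝ =>
      σ p.1 * ⟪gradient (fun x => u (x, p.2)) p.1, gradient (fun x => v (x, p.2)) p.1⟫ +
        deriv (fun y => u (p.1, y)) p.2 * deriv (fun y => v (p.1, y)) p.2) :=
    ((hσm.comp measurable_fst).mul ((aux_meas_grad hu).inner (aux_meas_grad hv))).add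
      ((aux_meas_deriv hu).mul (aux_meas_deriv hv))
  refine Integrable.mono' ((hintu.add hintv).const_mul (lam⁻¹ / 2))
    ((hA.mul hrest.aemeasurable).aestronglyMeasurable) ?_
  rw [ae_restrict_iff' hS]
  refine Filter.Eventually.of_forall fun p hp => ?_
  have hA0 : (0 : ℝ) ≤ p.2 ^ (1 - 2 * s) := Real.rpow_nonneg (le_of_lt hp.2) _
  set a := ‖gradient (fun x => u (x, p.2)) p.1‖ with ha
  set b := ‖gradient (fun x => v (x, p.2)) p.1‖ with hb
  set c := deriv (fun y => u (p.1, y)) p.2 with hc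
  set d := deriv (fun y => v (p.1, y)) p.2 with hd
  have hinv : (0 : ℝ) ≤ lam⁻¹ := inv_nonneg.2 hlam0.le
  have hX : |σ p.1 * ⟪gradient (fun x => u (x, p.2)) p.1, gradient (fun x => v (x, p.2)) p.1⟫ +
      c * d| ≤ lam⁻¹ * ((a ^ 2 + c ^ 2 + (b ^ 2 + d ^ 2)) / 2) := by
    have h1 := abs_add_le (σ p.1 *
      ⟪gradient (fun x => u (x, p.2)) p.1, gradient (fun x => v (x, p.2)) p.1⟫) (c * d)
    have h2 : |σ p.1 *
        ⟪gradient (fun x => u (x, p.2)) p.1, gradient (fun x => v (x, p.2)) p.1⟫| ≤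
        lam⁻¹ * (a * b) := by
      rw [abs_mul]
      exact mul_le_mul (hσb p.1) (abs_real_inner_le_norm _ _) (abs_nonneg _) hinv
    have h3 : |c * d| = |c| * |d| := abs_mul c d
    nlinarith [mul_nonneg hinv (sq_nonneg (a - b)), mul_nonneg hinv (sq_nonneg (|c| - |d|)),
      mul_nonneg (sub_nonneg.2 h1lam) (mul_nonneg (abs_nonneg c) (abs_nonneg d)),
      sq_abs c, sq_abs d]
  calc ‖p.2 ^ (1 - 2 * s) *
        (σ p.1 * ⟪gradient (fun x => u (x, p.2)) p.1, gradient (fun x => v (x, p.2)) p.1⟫ +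
          c * d)‖
      = p.2 ^ (1 - 2 * s) * |σ p.1 *
        ⟪gradient (fun x => u (x, p.2)) p.1, gradient (fun x => v (x, p.2)) p.1⟫ + c * d| := by
        rw [Real.norm_eq_abs, abs_mul, abs_of_nonneg hA0]
    _ ≤ p.2 ^ (1 - 2 * s) * (lam⁻¹ * ((a ^ 2 + c ^ 2 + (b ^ 2 + d ^ 2)) / 2)) :=
        mul_le_mul_of_nonneg_left hX hA0
    _ = lam⁻¹ / 2 * (p.2 ^ (1 - 2 * s) * (a ^ 2 + c ^ 2) +
          p.2 ^ (1 - 2 * s) * (b ^ 2 + d ^ 2)) := by ring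

lemma aux_integral_comb {α : Type*} [MeasurableSpace α] {μ : Measure α} {f g h k : α → ℝ}
    (hf : Integrable f μ) (hg : Integrable g μ) (hh : Integrable h μ) (hk : Integrable k μ) :
    ∫ a, (f a - g a - h a + k a) ∂μ =
      (∫ a, f a ∂μ) - (∫ a, g a ∂μ) - (∫ a, h a ∂μ) + ∫ a, k a ∂μ := by
  have h1 : Integrable (fun a => f a - g a) μ := hf.sub hg
  have h2 : Integrable (fun a => f a - g a - h a) μ := h1.sub hh
  rw [integral_add h2 hk, integral_sub h1 hh, integral_sub hf hg]

/-- The weighted Dirichlet bilinear form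
`B_σ(w,w') = ∫_{ℝⁿ×(0,∞)} y^{1−2s} ( σ(x)·∇ₓw·∇ₓw' + ∂_y w·∂_y w' ) dx dy`. -/
noncomputable def weightedForm (n : ℕ) (s : ℝ)
    (σ : EuclideanSpace ℝ (Fin n) → ℝ)
    (w w' : EuclideanSpace ℝ (Fin n) × ℝ → ℝ) : ℝ :=
  ∫ p in (Set.univ ×ˢ Set.Ioi (0 : ℝ) : Set (EuclideanSpace ℝ (Fin n) × ℝ)),
    p.2 ^ (1 - 2 * s) *
      (σ p.1 * ⟪gradient (fun x => w (x, p.2)) p.1, gradient (fun x => w' (x, p.2)) p.1⟫ +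
        deriv (fun y => w (p.1, y)) p.2 * deriv (fun y => w' (p.1, y)) p.2)

/-- extension-problem formulation of the two-sided monotonicity relation
(3.1) of Lemma 3.1. -/
theorem stmt_5 (n : ℕ) (hn : 1 ≤ n) (s lam : ℝ) (hs0 : 0 < s) (hs1 : s < 1)
    (hlam : lam ∈ Set.Ioo (0 : ℝ) 1)
    (Ω : Set (EuclideanSpace ℝ (Fin n))) (hΩopen : IsOpen Ω)
    (hΩbdd : Bornology.IsBounded Ω)
    (σ₁ σ₂ : EuclideanSpace ℝ (Fin n) → ℝ)
    (hσ₁m : Measurable σ₁) (hσ₂m : Measurable σ₂)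
    (hσ₁ : ∀ x, lam ≤ σ₁ x ∧ σ₁ x ≤ lam⁻¹)
    (hσ₂ : ∀ x, lam ≤ σ₂ x ∧ σ₂ x ≤ lam⁻¹)
    (hσeq : ∀ x ∉ Ω, σ₁ x = σ₂ x)
    (u₁ u₂ : EuclideanSpace ℝ (Fin n) × ℝ → ℝ)
    (hu₁ : Differentiable ℝ u₁) (hu₂ : Differentiable ℝ u₂)
    (hint₁ : IntegrableOn (fun p : EuclideanSpace ℝ (Fin n) × ℝ =>
        p.2 ^ (1 - 2 * s) *
          (‖gradient (fun x => u₁ (x, p.2)) p.1‖ ^ 2 + (deriv (fun y => u₁ (p.1, y)) p.2) ^ 2))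
      (Set.univ ×ˢ Set.Ioi (0 : ℝ)))
    (hint₂ : IntegrableOn (fun p : EuclideanSpace ℝ (Fin n) × ℝ =>
        p.2 ^ (1 - 2 * s) *
          (‖gradient (fun x => u₂ (x, p.2)) p.1‖ ^ 2 + (deriv (fun y => u₂ (p.1, y)) p.2) ^ 2))
      (Set.univ ×ˢ Set.Ioi (0 : ℝ)))
    (horth₁ : weightedForm n s σ₁ u₁ (u₁ - u₂) = 0)
    (horth₂ : weightedForm n s σ₂ u₂ (u₂ - u₁) = 0) :
    (∫ p in (Ω ×ˢ Set.Ioi (0 : ℝ) : Set (EuclideanSpace ℝ (Fin n) × ℝ)),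
        p.2 ^ (1 - 2 * s) * (σ₁ p.1 - σ₂ p.1) * ‖gradient (fun x => u₁ (x, p.2)) p.1‖ ^ 2)
        ≤ weightedForm n s σ₁ u₁ u₁ - weightedForm n s σ₂ u₂ u₂ ∧
      weightedForm n s σ₁ u₁ u₁ - weightedForm n s σ₂ u₂ u₂
        ≤ ∫ p in (Ω ×ˢ Set.Ioi (0 : ℝ) : Set (EuclideanSpace ℝ (Fin n) × ℝ)),
            p.2 ^ (1 - 2 * s) * (σ₁ p.1 - σ₂ p.1) * ‖gradient (fun x => u₂ (x, p.2)) p.1‖ ^ 2 := by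
  have hlam0 : (0 : ℝ) < lam := hlam.1
  have h1lam : (1 : ℝ) ≤ lam⁻¹ := by
    have h := mul_inv_cancel₀ (ne_of_gt hlam0)
    nlinarith [inv_nonneg.2 hlam0.le, hlam.2]
  have hb₁ : ∀ x, |σ₁ x| ≤ lam⁻¹ := fun x => abs_le.2
    ⟨by nlinarith [(hσ₁ x).1, inv_nonneg.2 hlam0.le], (hσ₁ x).2⟩
  have hb₂ : ∀ x, |σ₂ x| ≤ lam⁻¹ := fun x => abs_le.2
    ⟨by nlinarith [(hσ₂ x).1, inv_nonneg.2 hlam0.le], (hσ₂ x).2⟩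
  have hS : MeasurableSet (Set.univ ×ˢ Set.Ioi (0 : ℝ) :
      Set (EuclideanSpace ℝ (Fin n) × ℝ)) := MeasurableSet.univ.prod measurableSet_Ioi
  -- general algebraic facts about the bilinear form, for any admissible σ
  have key : ∀ σ : EuclideanSpace ℝ (Fin n) → ℝ, Measurable σ → (∀ x, |σ x| ≤ lam⁻¹) →
      (∀ x, lam ≤ σ x) →
      ∀ v w : EuclideanSpace ℝ (Fin n) × ℝ → ℝ, Differentiable ℝ v → Differentiable ℝ w →
      IntegrableOn (fun p : EuclideanSpace ℝ (Fin n) × ℝ =>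
        p.2 ^ (1 - 2 * s) *
          (‖gradient (fun x => v (x, p.2)) p.1‖ ^ 2 + (deriv (fun y => v (p.1, y)) p.2) ^ 2))
        (Set.univ ×ˢ Set.Ioi (0 : ℝ)) →
      IntegrableOn (fun p : EuclideanSpace ℝ (Fin n) × ℝ =>
        p.2 ^ (1 - 2 * s) *
          (‖gradient (fun x => w (x, p.2)) p.1‖ ^ 2 + (deriv (fun y => w (p.1, y)) p.2) ^ 2))
        (Set.univ ×ˢ Set.Ioi (0 : ℝ)) →
      (weightedForm n s σ v (v - w) = weightedForm n s σ v v - weightedForm n s σ v w) ∧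
      (weightedForm n s σ v w = weightedForm n s σ w v) ∧
      (0 ≤ weightedForm n s σ v v - weightedForm n s σ v w - weightedForm n s σ w v +
        weightedForm n s σ w w) := by
    intro σ hσm hσb hσl v w hv hw hintv hintw
    have hvv := aux_integrable hlam0 h1lam hσm hσb hv hv hintv hintv
    have hvw := aux_integrable hlam0 h1lam hσm hσb hv hw hintv hintw
    have hwv := aux_integrable hlam0 h1lam hσm hσb hw hv hintw hintv
    have hww := aux_integrable hlam0 h1lam hσm hσb hw hw hintw hintw
    refine ⟨?_, ?_, ?_⟩
    · unfold weightedForm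
      rw [← integral_sub hvv hvw]
      refine integral_congr_ae (Filter.Eventually.of_forall fun p => ?_)
      dsimp only
      rw [aux_grad_sub hv hw p, aux_deriv_sub hv hw p, inner_sub_right]
      ring
    · unfold weightedForm
      refine integral_congr_ae (Filter.Eventually.of_forall fun p => ?_)
      dsimp only
      rw [real_inner_comm]
      ring
    · have hquad : 0 ≤ weightedForm n s σ (v - w) (v - w) := by
        unfold weightedForm
        refine setIntegral_nonneg hS fun p hp => ?_
        have hA0 : (0 : ℝ) ≤ p.2 ^ (1 - 2 * s) := Real.rpow_nonneg (le_of_lt hp.2) _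
        have hσ0 : (0 : ℝ) ≤ σ p.1 := le_trans hlam0.le (hσl p.1)
        exact mul_nonneg hA0 (add_nonneg (mul_nonneg hσ0 real_inner_self_nonneg)
          (mul_self_nonneg _))
      have hexp : weightedForm n s σ (v - w) (v - w) =
          weightedForm n s σ v v - weightedForm n s σ v w - weightedForm n s σ w v +
            weightedForm n s σ w w := by
        unfold weightedForm
        rw [← aux_integral_comb hvv hvw hwv hww]
        refine integral_congr_ae (Filter.Eventually.of_forall fun p => ?_)
        dsimp only
        rw [aux_grad_sub hv hw p, aux_deriv_sub hv hw p]
        simp only [inner_sub_left, inner_sub_right]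
        ring
      linarith
  -- the difference of the two forms on the diagonal localizes to Ω
  have ediff : ∀ v : EuclideanSpace ℝ (Fin n) × ℝ → ℝ, Differentiable ℝ v →
      IntegrableOn (fun p : EuclideanSpace ℝ (Fin n) × ℝ =>
        p.2 ^ (1 - 2 * s) *
          (‖gradient (fun x => v (x, p.2)) p.1‖ ^ 2 + (deriv (fun y => v (p.1, y)) p.2) ^ 2))
        (Set.univ ×ˢ Set.Ioi (0 : ℝ)) →
      weightedForm n s σ₁ v v - weightedForm n s σ₂ v v =
        ∫ p in (Ω ×ˢ Set.Ioi (0 : ℝ) : Set (EuclideanSpace ℝ (Fin n) × ℝ)),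
          p.2 ^ (1 - 2 * s) * (σ₁ p.1 - σ₂ p.1) * ‖gradient (fun x => v (x, p.2)) p.1‖ ^ 2 := by
    intro v hv hintv
    have h1 := aux_integrable hlam0 h1lam hσ₁m hb₁ hv hv hintv hintv
    have h2 := aux_integrable hlam0 h1lam hσ₂m hb₂ hv hv hintv hintv
    unfold weightedForm
    rw [← integral_sub h1 h2]
    have step1 : (∫ p in (Set.univ ×ˢ Set.Ioi (0 : ℝ) :
        Set (EuclideanSpace ℝ (Fin n) × ℝ)),
          (p.2 ^ (1 - 2 * s) *
            (σ₁ p.1 * ⟪gradient (fun x => v (x, p.2)) p.1, gradient (fun x => v (x, p.2)) p.1⟫ +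
              deriv (fun y => v (p.1, y)) p.2 * deriv (fun y => v (p.1, y)) p.2) -
          p.2 ^ (1 - 2 * s) *
            (σ₂ p.1 * ⟪gradient (fun x => v (x, p.2)) p.1, gradient (fun x => v (x, p.2)) p.1⟫ +
              deriv (fun y => v (p.1, y)) p.2 * deriv (fun y => v (p.1, y)) p.2))) =
        ∫ p in (Set.univ ×ˢ Set.Ioi (0 : ℝ) : Set (EuclideanSpace ℝ (Fin n) × ℝ)),
          p.2 ^ (1 - 2 * s) * (σ₁ p.1 - σ₂ p.1) * ‖gradient (fun x => v (x, p.2)) p.1‖ ^ 2 := by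
      refine integral_congr_ae (Filter.Eventually.of_forall fun p => ?_)
      dsimp only
      rw [real_inner_self_eq_norm_sq]
      ring
    rw [step1]
    refine setIntegral_eq_of_subset_of_forall_diff_eq_zero hS
      (Set.prod_mono (Set.subset_univ Ω) (subset_refl _)) fun p hp => ?_
    have hp1 : p.1 ∉ Ω := fun h => hp.2 ⟨h, hp.1.2⟩
    rw [hσeq p.1 hp1]
    simp
  obtain ⟨e1, sym1, q1⟩ := key σ₁ hσ₁m hb₁ (fun x => (hσ₁ x).1) u₁ u₂ hu₁ hu₂ hint₁ hint₂
  obtain ⟨e2, sym2, q2⟩ := key σ₂ hσ₂m hb₂ (fun x => (hσ₂ x).1) u₂ u₁ hu₂ hu₁ hint₂ hint₁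
  have A1 : weightedForm n s σ₁ u₁ u₁ = weightedForm n s σ₁ u₁ u₂ := by
    rw [e1] at horth₁; linarith
  have A2 : weightedForm n s σ₂ u₂ u₂ = weightedForm n s σ₂ u₂ u₁ := by
    rw [e2] at horth₂; linarith
  have hle1 : weightedForm n s σ₁ u₁ u₁ ≤ weightedForm n s σ₁ u₂ u₂ := by linarith
  have hle2 : weightedForm n s σ₂ u₂ u₂ ≤ weightedForm n s σ₂ u₁ u₁ := by linarith
  have d1 := ediff u₁ hu₁ hint₁
  have d2 := ediff u₂ hu₂ hint₂
  constructor
  · linarith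
  · linarith
end

section
/- Let n ≥ 1, 0 < s < 1, λ ∈ (0,1), and let Ω ⊂ ℝⁿ be a bounded open set. Let σ₁, σ₂ : ℝⁿ → ℝ be measurable with λ ≤ σⱼ(x) ≤ λ⁻¹ for all x and σ₁ = σ₂ on ℝⁿ∖Ω. Let ũ₁, ũ₂ : ℝⁿ×(0,∞) → ℝ be differentiable with y^{1−2s}|∇_{x,y}ũⱼ(x,y)|² integrable over ℝⁿ×(0,∞) for j = 1,2, and define B_σ(w,w') := ∫_{ℝⁿ×(0,∞)} y^{1−2s} ( σ(x)·∇_x w(x,y)·∇_x w'(x,y) + ∂_y w(x,y)·∂_y w'(x,y) ) dx dy. If B_{σ₂}(ũ₂, ũ₂ − ũ₁) = 0, then ∫_{Ω×(0,∞)} y^{1−2s} (σ₂(x)/σ₁(x))·(σ₁(x) − σ₂(x))·|∇_x ũ₂(x,y)|² dx dy ≤ B_{σ₁}(ũ₁,ũ₁) − B_{σ₂}(ũ₂,ũ₂). -/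
open MeasureTheory
open scoped RealInnerProductSpace

section aux
variable {n : ℕ}

local notation "E" => EuclideanSpace ℝ (Fin n)

/-- partial gradient in the x-variables, via the full Fréchet derivative. -/
noncomputable def pgrad (u : EuclideanSpace ℝ (Fin n) × ℝ → ℝ)
    (p : EuclideanSpace ℝ (Fin n) × ℝ) : EuclideanSpace ℝ (Fin n) :=
  (InnerProductSpace.toDual ℝ (EuclideanSpace ℝ (Fin n))).symm
    ((fderiv ℝ u p).comp (ContinuousLinearMap.inl ℝ (EuclideanSpace ℝ (Fin n)) ℝ))

/-- partial derivative in the y-variable, via the full Fréchet derivative. -/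
noncomputable def pder (u : EuclideanSpace ℝ (Fin n) × ℝ → ℝ)
    (p : EuclideanSpace ℝ (Fin n) × ℝ) : ℝ :=
  fderiv ℝ u p (0, 1)

lemma pgrad_eq (u : E × ℝ → ℝ) (hu : Differentiable ℝ u) (p : E × ℝ) :
    gradient (fun x => u (x, p.2)) p.1 = pgrad u p := by
  have h : HasFDerivAt (fun x : E => u (x, p.2))
      ((fderiv ℝ u p).comp (ContinuousLinearMap.inl ℝ (EuclideanSpace ℝ (Fin n)) ℝ)) p.1 := by
    have h0 := ((hu (p.1, p.2)).hasFDerivAt.comp p.1 (hasFDerivAt_prodMk_left (𝕜 := ℝ) p.1 p.2))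
    exact h0
  unfold gradient pgrad
  rw [h.fderiv]

lemma pder_eq (u : E × ℝ → ℝ) (hu : Differentiable ℝ u) (p : E × ℝ) :
    deriv (fun y => u (p.1, y)) p.2 = pder u p := by
  have h2 : HasFDerivAt (fun y : ℝ => u (p.1, y))
      ((fderiv ℝ u p).comp (ContinuousLinearMap.inr ℝ (EuclideanSpace ℝ (Fin n)) ℝ)) p.2 := by
    have h0 := ((hu (p.1, p.2)).hasFDerivAt.comp p.2 (hasFDerivAt_prodMk_right p.1 p.2))
    exact h0
  have h : HasDerivAt (fun y : ℝ => u (p.1, y)) (pder u p) p.2 := by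
    have := h2.hasDerivAt
    simpa [pder] using this
  exact h.deriv

lemma pgrad_sm (u : E × ℝ → ℝ) : StronglyMeasurable (pgrad u) := by
  apply Measurable.stronglyMeasurable
  have h1 : Measurable (fderiv ℝ u) := measurable_fderiv ℝ u
  have h2 : Continuous fun L : (E × ℝ) →L[ℝ] ℝ =>
      (InnerProductSpace.toDual ℝ (EuclideanSpace ℝ (Fin n))).symm
        (L.comp (ContinuousLinearMap.inl ℝ (EuclideanSpace ℝ (Fin n)) ℝ)) :=
    (InnerProductSpace.toDual ℝ (EuclideanSpace ℝ (Fin n))).symm.continuous.comp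
      (continuous_id.clm_comp continuous_const)
  exact h2.measurable.comp h1

lemma pder_sm (u : E × ℝ → ℝ) : StronglyMeasurable (pder u) :=
  (measurable_fderiv_apply_const ℝ u (0, 1)).stronglyMeasurable

lemma pgrad_sub (u v : E × ℝ → ℝ) (hu : Differentiable ℝ u) (hv : Differentiable ℝ v)
    (p : E × ℝ) : pgrad (u - v) p = pgrad u p - pgrad v p := by
  unfold pgrad
  rw [show (u - v) = (fun q => u q - v q) from rfl, fderiv_fun_sub (hu p) (hv p),
    ContinuousLinearMap.sub_comp, map_sub]

lemma pder_sub (u v : E × ℝ → ℝ) (hu : Differentiable ℝ u) (hv : Differentiable ℝ v)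
    (p : E × ℝ) : pder (u - v) p = pder u p - pder v p := by
  unfold pder
  rw [show (u - v) = (fun q => u q - v q) from rfl, fderiv_fun_sub (hu p) (hv p),
    ContinuousLinearMap.sub_apply]

lemma integrable_aux (s : ℝ) (c : E → ℝ) (hc : Measurable c) (C : ℝ)
    (hC : ∀ x, |c x| ≤ C) (v w : E × ℝ → ℝ)
    (hv : IntegrableOn (fun p : E × ℝ =>
        p.2 ^ (1 - 2 * s) * (‖pgrad v p‖ ^ 2 + (pder v p) ^ 2)) (Set.univ ×ˢ Set.Ioi (0 : ℝ)))
    (hw : IntegrableOn (fun p : E × ℝ =>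
        p.2 ^ (1 - 2 * s) * (‖pgrad w p‖ ^ 2 + (pder w p) ^ 2)) (Set.univ ×ˢ Set.Ioi (0 : ℝ))) :
    IntegrableOn (fun p : E × ℝ =>
        p.2 ^ (1 - 2 * s) * (c p.1 * ⟪pgrad v p, pgrad w p⟫ + pder v p * pder w p))
      (Set.univ ×ˢ Set.Ioi (0 : ℝ)) := by
  have hSmeas : MeasurableSet (Set.univ ×ˢ Set.Ioi (0 : ℝ) : Set (E × ℝ)) :=
    MeasurableSet.univ.prod measurableSet_Ioi
  set M := max C 1 with hM
  have hM1 : (1 : ℝ) ≤ M := le_max_right _ _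
  have hMC : ∀ x, |c x| ≤ M := fun x => (hC x).trans (le_max_left _ _)
  have hdom : IntegrableOn (fun p : E × ℝ =>
      (M / 2) * (p.2 ^ (1 - 2 * s) * (‖pgrad v p‖ ^ 2 + (pder v p) ^ 2) +
        p.2 ^ (1 - 2 * s) * (‖pgrad w p‖ ^ 2 + (pder w p) ^ 2)))
      (Set.univ ×ˢ Set.Ioi (0 : ℝ)) := (hv.add hw).const_mul _
  refine hdom.mono' ?_ ?_
  · apply Measurable.aestronglyMeasurable
    exact (measurable_snd.pow_const _).mul
      (((hc.comp measurable_fst).mul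
        ((pgrad_sm v).measurable.inner (pgrad_sm w).measurable)).add
        ((pder_sm v).measurable.mul (pder_sm w).measurable))
  · refine (ae_restrict_iff' hSmeas).2 (ae_of_all _ fun p hp => ?_)
    have hy : (0 : ℝ) ≤ p.2 ^ (1 - 2 * s) :=
      Real.rpow_nonneg (le_of_lt (Set.mem_Ioi.mp hp.2)) _
    have e3 : |⟪pgrad v p, pgrad w p⟫| ≤ ‖pgrad v p‖ * ‖pgrad w p‖ :=
      abs_real_inner_le_norm _ _
    have hX : |c p.1 * ⟪pgrad v p, pgrad w p⟫ + pder v p * pder w p| ≤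
        (M / 2) * ((‖pgrad v p‖ ^ 2 + (pder v p) ^ 2) + (‖pgrad w p‖ ^ 2 + (pder w p) ^ 2)) := by
      have e1 := hMC p.1
      have e2 : |c p.1 * ⟪pgrad v p, pgrad w p⟫| ≤ M * (‖pgrad v p‖ * ‖pgrad w p‖) := by
        rw [abs_mul]
        exact mul_le_mul e1 e3 (abs_nonneg _) (le_trans (abs_nonneg _) e1)
      have e4 : |pder v p * pder w p| ≤ |pder v p| * |pder w p| := le_of_eq (abs_mul _ _)
      have habs := abs_add_le (c p.1 * ⟪pgrad v p, pgrad w p⟫) (pder v p * pder w p)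
      nlinarith [sq_nonneg (‖pgrad v p‖ - ‖pgrad w p‖), sq_nonneg (|pder v p| - |pder w p|),
        sq_abs (pder v p), sq_abs (pder w p), abs_nonneg (pder v p), abs_nonneg (pder w p),
        norm_nonneg (pgrad v p), norm_nonneg (pgrad w p), sq_nonneg (pder v p),
        sq_nonneg (pder w p)]
    calc ‖p.2 ^ (1 - 2 * s) * (c p.1 * ⟪pgrad v p, pgrad w p⟫ + pder v p * pder w p)‖
        = p.2 ^ (1 - 2 * s) * |c p.1 * ⟪pgrad v p, pgrad w p⟫ + pder v p * pder w p| := by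
          rw [Real.norm_eq_abs, abs_mul, abs_of_nonneg hy]
      _ ≤ p.2 ^ (1 - 2 * s) *
            ((M / 2) * ((‖pgrad v p‖ ^ 2 + (pder v p) ^ 2) +
              (‖pgrad w p‖ ^ 2 + (pder w p) ^ 2))) := mul_le_mul_of_nonneg_left hX hy
      _ = (M / 2) * (p.2 ^ (1 - 2 * s) * (‖pgrad v p‖ ^ 2 + (pder v p) ^ 2) +
              p.2 ^ (1 - 2 * s) * (‖pgrad w p‖ ^ 2 + (pder w p) ^ 2)) := by ring

lemma integrable_aux2 (s : ℝ) (c : E → ℝ) (hc : Measurable c) (C : ℝ)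
    (hC : ∀ x, |c x| ≤ C) (w : E × ℝ → ℝ)
    (hw : IntegrableOn (fun p : E × ℝ =>
        p.2 ^ (1 - 2 * s) * (‖pgrad w p‖ ^ 2 + (pder w p) ^ 2)) (Set.univ ×ˢ Set.Ioi (0 : ℝ))) :
    IntegrableOn (fun p : E × ℝ => p.2 ^ (1 - 2 * s) * c p.1 * ‖pgrad w p‖ ^ 2)
      (Set.univ ×ˢ Set.Ioi (0 : ℝ)) := by
  have hSmeas : MeasurableSet (Set.univ ×ˢ Set.Ioi (0 : ℝ) : Set (E × ℝ)) :=
    MeasurableSet.univ.prod measurableSet_Ioi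
  set M := max C 0 with hM
  have hMC : ∀ x, |c x| ≤ M := fun x => (hC x).trans (le_max_left _ _)
  have hM0 : (0:ℝ) ≤ M := le_max_right _ _
  have hdom : IntegrableOn (fun p : E × ℝ =>
      M * (p.2 ^ (1 - 2 * s) * (‖pgrad w p‖ ^ 2 + (pder w p) ^ 2)))
      (Set.univ ×ˢ Set.Ioi (0 : ℝ)) := hw.const_mul _
  refine hdom.mono' ?_ ?_
  · exact (((measurable_snd.pow_const _).mul (hc.comp measurable_fst)).mul
      ((pgrad_sm w).measurable.norm.pow_const _)).aestronglyMeasurable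
  · refine (ae_restrict_iff' hSmeas).2 (ae_of_all _ fun p hp => ?_)
    have hy : (0 : ℝ) ≤ p.2 ^ (1 - 2 * s) :=
      Real.rpow_nonneg (le_of_lt (Set.mem_Ioi.mp hp.2)) _
    have h1 := hMC p.1
    have h2 := abs_nonneg (c p.1)
    rw [Real.norm_eq_abs, abs_mul, abs_mul, abs_of_nonneg hy, abs_of_nonneg (sq_nonneg ‖pgrad w p‖)]
    nlinarith [mul_nonneg (mul_nonneg hy (sub_nonneg.mpr h1)) (sq_nonneg ‖pgrad w p‖),
      mul_nonneg (mul_nonneg hM0 hy) (sq_nonneg (pder w p))]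

lemma key_ineq (a b : E) {α β dv dw : ℝ} (hα : 0 < α) :
    β / α * (α - β) * ‖b‖ ^ 2 ≤
      α * ⟪a, a⟫ + dv ^ 2 - 2 * (β * ⟪b, a⟫ + dw * dv) + β * ⟪b, b⟫ + dw ^ 2 := by
  set t := β / α with htdef
  have hβ : β = t * α := by
    rw [htdef]; field_simp
  have hsq : 0 ≤ α * ‖a - t • b‖ ^ 2 := mul_nonneg hα.le (sq_nonneg _)
  rw [norm_sub_sq_real, real_inner_smul_right, norm_smul, mul_pow, Real.norm_eq_abs,
    sq_abs] at hsq
  rw [real_inner_self_eq_norm_sq, real_inner_self_eq_norm_sq, real_inner_comm a b, hβ]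
  nlinarith [hsq, sq_nonneg (dv - dw)]

end aux

/-- extension-problem formulation of the refined monotonicity relation
(3.2) of Lemma 3.1. -/
theorem stmt_6 (n : ℕ) (hn : 1 ≤ n) (s lam : ℝ) (hs0 : 0 < s) (hs1 : s < 1)
    (hlam : lam ∈ Set.Ioo (0 : ℝ) 1)
    (Ω : Set (EuclideanSpace ℝ (Fin n))) (hΩopen : IsOpen Ω)
    (hΩbdd : Bornology.IsBounded Ω)
    (σ₁ σ₂ : EuclideanSpace ℝ (Fin n) → ℝ)
    (hσ₁m : Measurable σ₁) (hσ₂m : Measurable σ₂)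
    (hσ₁ : ∀ x, lam ≤ σ₁ x ∧ σ₁ x ≤ lam⁻¹)
    (hσ₂ : ∀ x, lam ≤ σ₂ x ∧ σ₂ x ≤ lam⁻¹)
    (hσeq : ∀ x ∉ Ω, σ₁ x = σ₂ x)
    (u₁ u₂ : EuclideanSpace ℝ (Fin n) × ℝ → ℝ)
    (hu₁ : Differentiable ℝ u₁) (hu₂ : Differentiable ℝ u₂)
    (hint₁ : IntegrableOn (fun p : EuclideanSpace ℝ (Fin n) × ℝ =>
        p.2 ^ (1 - 2 * s) *
          (‖gradient (fun x => u₁ (x, p.2)) p.1‖ ^ 2 + (deriv (fun y => u₁ (p.1, y)) p.2) ^ 2))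
      (Set.univ ×ˢ Set.Ioi (0 : ℝ)))
    (hint₂ : IntegrableOn (fun p : EuclideanSpace ℝ (Fin n) × ℝ =>
        p.2 ^ (1 - 2 * s) *
          (‖gradient (fun x => u₂ (x, p.2)) p.1‖ ^ 2 + (deriv (fun y => u₂ (p.1, y)) p.2) ^ 2))
      (Set.univ ×ˢ Set.Ioi (0 : ℝ)))
    (horth₂ : weightedForm n s σ₂ u₂ (u₂ - u₁) = 0) :
    (∫ p in (Ω ×ˢ Set.Ioi (0 : ℝ) : Set (EuclideanSpace ℝ (Fin n) × ℝ)),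
        p.2 ^ (1 - 2 * s) * (σ₂ p.1 / σ₁ p.1) * (σ₁ p.1 - σ₂ p.1) *
          ‖gradient (fun x => u₂ (x, p.2)) p.1‖ ^ 2)
      ≤ weightedForm n s σ₁ u₁ u₁ - weightedForm n s σ₂ u₂ u₂ := by
  obtain ⟨hlam0, hlam1⟩ := hlam
  have hinv0 : (0 : ℝ) < lam⁻¹ := inv_pos.2 hlam0
  have hlaml : lam * lam⁻¹ = 1 := mul_inv_cancel₀ hlam0.ne'
  have hli : (1 : ℝ) ≤ lam⁻¹ := by nlinarith
  have hlamle : lam ≤ lam⁻¹ := by nlinarith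
  have hb₁ : ∀ x, |σ₁ x| ≤ lam⁻¹ := fun x =>
    abs_le.mpr ⟨by linarith [(hσ₁ x).1], (hσ₁ x).2⟩
  have hb₂ : ∀ x, |σ₂ x| ≤ lam⁻¹ := fun x =>
    abs_le.mpr ⟨by linarith [(hσ₂ x).1], (hσ₂ x).2⟩
  have hSmeas : MeasurableSet
      (Set.univ ×ˢ Set.Ioi (0 : ℝ) : Set (EuclideanSpace ℝ (Fin n) × ℝ)) :=
    MeasurableSet.univ.prod measurableSet_Ioi
  -- rewrite the integrability hypotheses in terms of pgrad / pder
  have hint₁' : IntegrableOn (fun p : EuclideanSpace ℝ (Fin n) × ℝ =>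
      p.2 ^ (1 - 2 * s) * (‖pgrad u₁ p‖ ^ 2 + (pder u₁ p) ^ 2))
      (Set.univ ×ˢ Set.Ioi (0 : ℝ)) := by
    have e : (fun p : EuclideanSpace ℝ (Fin n) × ℝ =>
        p.2 ^ (1 - 2 * s) *
          (‖gradient (fun x => u₁ (x, p.2)) p.1‖ ^ 2 + (deriv (fun y => u₁ (p.1, y)) p.2) ^ 2)) =
        fun p => p.2 ^ (1 - 2 * s) * (‖pgrad u₁ p‖ ^ 2 + (pder u₁ p) ^ 2) :=
      funext fun p => by rw [pgrad_eq u₁ hu₁ p, pder_eq u₁ hu₁ p]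
    exact e ▸ hint₁
  have hint₂' : IntegrableOn (fun p : EuclideanSpace ℝ (Fin n) × ℝ =>
      p.2 ^ (1 - 2 * s) * (‖pgrad u₂ p‖ ^ 2 + (pder u₂ p) ^ 2))
      (Set.univ ×ˢ Set.Ioi (0 : ℝ)) := by
    have e : (fun p : EuclideanSpace ℝ (Fin n) × ℝ =>
        p.2 ^ (1 - 2 * s) *
          (‖gradient (fun x => u₂ (x, p.2)) p.1‖ ^ 2 + (deriv (fun y => u₂ (p.1, y)) p.2) ^ 2)) =
        fun p => p.2 ^ (1 - 2 * s) * (‖pgrad u₂ p‖ ^ 2 + (pder u₂ p) ^ 2) :=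
      funext fun p => by rw [pgrad_eq u₂ hu₂ p, pder_eq u₂ hu₂ p]
    exact e ▸ hint₂
  -- the three integrands
  set f11 : EuclideanSpace ℝ (Fin n) × ℝ → ℝ := fun p =>
    p.2 ^ (1 - 2 * s) * (σ₁ p.1 * ⟪pgrad u₁ p, pgrad u₁ p⟫ + pder u₁ p * pder u₁ p) with hf11
  set f21 : EuclideanSpace ℝ (Fin n) × ℝ → ℝ := fun p =>
    p.2 ^ (1 - 2 * s) * (σ₂ p.1 * ⟪pgrad u₂ p, pgrad u₁ p⟫ + pder u₂ p * pder u₁ p) with hf21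
  set f22 : EuclideanSpace ℝ (Fin n) × ℝ → ℝ := fun p =>
    p.2 ^ (1 - 2 * s) * (σ₂ p.1 * ⟪pgrad u₂ p, pgrad u₂ p⟫ + pder u₂ p * pder u₂ p) with hf22
  have hI11 : IntegrableOn f11 (Set.univ ×ˢ Set.Ioi (0 : ℝ)) :=
    integrable_aux s σ₁ hσ₁m lam⁻¹ hb₁ u₁ u₁ hint₁' hint₁'
  have hI21 : IntegrableOn f21 (Set.univ ×ˢ Set.Ioi (0 : ℝ)) :=
    integrable_aux s σ₂ hσ₂m lam⁻¹ hb₂ u₂ u₁ hint₂' hint₁'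
  have hI22 : IntegrableOn f22 (Set.univ ×ˢ Set.Ioi (0 : ℝ)) :=
    integrable_aux s σ₂ hσ₂m lam⁻¹ hb₂ u₂ u₂ hint₂' hint₂'
  -- rewrite the weighted forms
  have wf11 : weightedForm n s σ₁ u₁ u₁ = ∫ p in
      (Set.univ ×ˢ Set.Ioi (0 : ℝ) : Set (EuclideanSpace ℝ (Fin n) × ℝ)), f11 p := by
    unfold weightedForm
    refine integral_congr_ae (ae_of_all _ fun p => ?_)
    simp only [hf11, pgrad_eq u₁ hu₁, pder_eq u₁ hu₁]
  have wf22 : weightedForm n s σ₂ u₂ u₂ = ∫ p in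
      (Set.univ ×ˢ Set.Ioi (0 : ℝ) : Set (EuclideanSpace ℝ (Fin n) × ℝ)), f22 p := by
    unfold weightedForm
    refine integral_congr_ae (ae_of_all _ fun p => ?_)
    simp only [hf22, pgrad_eq u₂ hu₂, pder_eq u₂ hu₂]
  -- the orthogonality relation
  have hwdiff : Differentiable ℝ (u₂ - u₁) := hu₂.sub hu₁
  have horth' : (∫ p in
      (Set.univ ×ˢ Set.Ioi (0 : ℝ) : Set (EuclideanSpace ℝ (Fin n) × ℝ)), f22 p) = ∫ p in
      (Set.univ ×ˢ Set.Ioi (0 : ℝ) : Set (EuclideanSpace ℝ (Fin n) × ℝ)), f21 p := by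
    have h0 : weightedForm n s σ₂ u₂ (u₂ - u₁) = ∫ p in
        (Set.univ ×ˢ Set.Ioi (0 : ℝ) : Set (EuclideanSpace ℝ (Fin n) × ℝ)),
        (f22 p - f21 p) := by
      unfold weightedForm
      refine integral_congr_ae (ae_of_all _ fun p => ?_)
      simp only [hf22, hf21, pgrad_eq u₂ hu₂, pder_eq u₂ hu₂, pgrad_eq (u₂ - u₁) hwdiff,
        pder_eq (u₂ - u₁) hwdiff, pgrad_sub u₂ u₁ hu₂ hu₁, pder_sub u₂ u₁ hu₂ hu₁,
        inner_sub_right]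
      ring
    rw [h0, integral_sub hI22 hI21] at horth₂
    linarith
  -- split the combined integral
  have hI21' : IntegrableOn (fun p => 2 * f21 p) (Set.univ ×ˢ Set.Ioi (0 : ℝ)) :=
    hI21.const_mul 2
  have hIsub : IntegrableOn (fun p => f11 p - 2 * f21 p) (Set.univ ×ˢ Set.Ioi (0 : ℝ)) :=
    hI11.sub hI21'
  have hIH : IntegrableOn (fun p => f11 p - 2 * f21 p + f22 p)
      (Set.univ ×ˢ Set.Ioi (0 : ℝ)) := hIsub.add hI22
  have hsplit : ∫ p in
      (Set.univ ×ˢ Set.Ioi (0 : ℝ) : Set (EuclideanSpace ℝ (Fin n) × ℝ)),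
      (f11 p - 2 * f21 p + f22 p) =
      (∫ p in (Set.univ ×ˢ Set.Ioi (0 : ℝ) : Set (EuclideanSpace ℝ (Fin n) × ℝ)), f11 p) -
        2 * (∫ p in (Set.univ ×ˢ Set.Ioi (0 : ℝ) : Set (EuclideanSpace ℝ (Fin n) × ℝ)), f21 p) +
        ∫ p in (Set.univ ×ˢ Set.Ioi (0 : ℝ) : Set (EuclideanSpace ℝ (Fin n) × ℝ)), f22 p := by
    rw [integral_add hIsub hI22, integral_sub hI11 hI21', integral_const_mul]
  -- the left-hand side
  set φ : EuclideanSpace ℝ (Fin n) × ℝ → ℝ := fun p =>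
    p.2 ^ (1 - 2 * s) * (σ₂ p.1 / σ₁ p.1 * (σ₁ p.1 - σ₂ p.1)) * ‖pgrad u₂ p‖ ^ 2 with hφ
  have hLHS1 : (∫ p in (Ω ×ˢ Set.Ioi (0 : ℝ) : Set (EuclideanSpace ℝ (Fin n) × ℝ)),
      p.2 ^ (1 - 2 * s) * (σ₂ p.1 / σ₁ p.1) * (σ₁ p.1 - σ₂ p.1) *
        ‖gradient (fun x => u₂ (x, p.2)) p.1‖ ^ 2) =
      ∫ p in (Ω ×ˢ Set.Ioi (0 : ℝ) : Set (EuclideanSpace ℝ (Fin n) × ℝ)), φ p := by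
    refine integral_congr_ae (ae_of_all _ fun p => ?_)
    simp only [hφ, pgrad_eq u₂ hu₂]
    ring
  have hLHS2 : (∫ p in (Ω ×ˢ Set.Ioi (0 : ℝ) : Set (EuclideanSpace ℝ (Fin n) × ℝ)), φ p) =
      ∫ p in (Set.univ ×ˢ Set.Ioi (0 : ℝ) : Set (EuclideanSpace ℝ (Fin n) × ℝ)), φ p := by
    symm
    refine setIntegral_eq_of_subset_of_forall_diff_eq_zero hSmeas
      (Set.prod_mono (Set.subset_univ Ω) subset_rfl) (fun p hp => ?_)
    have hp1 : p.1 ∉ Ω := fun h => hp.2 (Set.mem_prod.mpr ⟨h, hp.1.2⟩)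
    simp only [hφ]
    rw [hσeq p.1 hp1, sub_self, mul_zero, mul_zero, zero_mul]
  -- integrability of φ
  have hcbound : ∀ x, |σ₂ x / σ₁ x * (σ₁ x - σ₂ x)| ≤ lam⁻¹ * lam⁻¹ * lam⁻¹ := by
    intro x
    obtain ⟨h11, h12⟩ := hσ₁ x
    obtain ⟨h21, h22⟩ := hσ₂ x
    have hσ₁pos : 0 < σ₁ x := lt_of_lt_of_le hlam0 h11
    rw [abs_mul]
    have e1 : |σ₂ x / σ₁ x| ≤ lam⁻¹ * lam⁻¹ := by
      rw [abs_div, abs_of_pos hσ₁pos, abs_of_pos (lt_of_lt_of_le hlam0 h21)]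
      calc σ₂ x / σ₁ x ≤ lam⁻¹ / lam :=
            div_le_div₀ (le_of_lt hinv0) h22 hlam0 h11
        _ = lam⁻¹ * lam⁻¹ := by rw [div_eq_mul_inv]
    have e2 : |σ₁ x - σ₂ x| ≤ lam⁻¹ := abs_le.mpr ⟨by linarith, by linarith⟩
    calc |σ₂ x / σ₁ x| * |σ₁ x - σ₂ x| ≤ (lam⁻¹ * lam⁻¹) * lam⁻¹ :=
          mul_le_mul e1 e2 (abs_nonneg _) (by positivity)
      _ = lam⁻¹ * lam⁻¹ * lam⁻¹ := rfl
  have hφint : IntegrableOn φ (Set.univ ×ˢ Set.Ioi (0 : ℝ)) :=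
    integrable_aux2 s (fun x => σ₂ x / σ₁ x * (σ₁ x - σ₂ x))
      ((hσ₂m.div hσ₁m).mul (hσ₁m.sub hσ₂m)) (lam⁻¹ * lam⁻¹ * lam⁻¹) hcbound u₂ hint₂'
  -- pointwise comparison on the whole strip
  have hpt : ∀ p ∈ (Set.univ ×ˢ Set.Ioi (0 : ℝ) : Set (EuclideanSpace ℝ (Fin n) × ℝ)),
      φ p ≤ f11 p - 2 * f21 p + f22 p := by
    intro p hp
    have hy : (0 : ℝ) ≤ p.2 ^ (1 - 2 * s) :=
      Real.rpow_nonneg (le_of_lt (Set.mem_Ioi.mp hp.2)) _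
    have hσ₁pos : 0 < σ₁ p.1 := lt_of_lt_of_le hlam0 (hσ₁ p.1).1
    have key := key_ineq (pgrad u₁ p) (pgrad u₂ p)
      (α := σ₁ p.1) (β := σ₂ p.1) (dv := pder u₁ p) (dw := pder u₂ p) hσ₁pos
    simp only [hφ, hf11, hf21, hf22]
    calc p.2 ^ (1 - 2 * s) * (σ₂ p.1 / σ₁ p.1 * (σ₁ p.1 - σ₂ p.1)) * ‖pgrad u₂ p‖ ^ 2
        = p.2 ^ (1 - 2 * s) *
            (σ₂ p.1 / σ₁ p.1 * (σ₁ p.1 - σ₂ p.1) * ‖pgrad u₂ p‖ ^ 2) := by ring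
      _ ≤ p.2 ^ (1 - 2 * s) *
            (σ₁ p.1 * ⟪pgrad u₁ p, pgrad u₁ p⟫ + (pder u₁ p) ^ 2 -
              2 * (σ₂ p.1 * ⟪pgrad u₂ p, pgrad u₁ p⟫ + pder u₂ p * pder u₁ p) +
              σ₂ p.1 * ⟪pgrad u₂ p, pgrad u₂ p⟫ + (pder u₂ p) ^ 2) :=
          mul_le_mul_of_nonneg_left key hy
      _ = p.2 ^ (1 - 2 * s) * (σ₁ p.1 * ⟪pgrad u₁ p, pgrad u₁ p⟫ + pder u₁ p * pder u₁ p) -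
            2 * (p.2 ^ (1 - 2 * s) *
              (σ₂ p.1 * ⟪pgrad u₂ p, pgrad u₁ p⟫ + pder u₂ p * pder u₁ p)) +
            p.2 ^ (1 - 2 * s) *
              (σ₂ p.1 * ⟪pgrad u₂ p, pgrad u₂ p⟫ + pder u₂ p * pder u₂ p) := by ring
  -- conclude
  have hmono : (∫ p in
      (Set.univ ×ˢ Set.Ioi (0 : ℝ) : Set (EuclideanSpace ℝ (Fin n) × ℝ)), φ p) ≤ ∫ p in
      (Set.univ ×ˢ Set.Ioi (0 : ℝ) : Set (EuclideanSpace ℝ (Fin n) × ℝ)),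
      (f11 p - 2 * f21 p + f22 p) :=
    setIntegral_mono_on hφint hIH hSmeas hpt
  rw [hLHS1, hLHS2, wf11, wf22]
  rw [hsplit] at hmono
  linarith [hmono, horth']
end

section
/- Let n ≥ 1, 0 < s < 1, λ ∈ (0,1), and let Ω ⊂ ℝⁿ be a bounded open set. Let σ₁, σ₂ : ℝⁿ → ℝ be measurable with λ ≤ σⱼ(x) ≤ λ⁻¹ for all x, σ₁ = σ₂ on ℝⁿ∖Ω, and σ₁(x) ≥ σ₂(x) for almost every x ∈ ℝⁿ. Let ũ₁, ũ₂ : ℝⁿ×(0,∞) → ℝ be differentiable with y^{1−2s}|∇_{x,y}ũⱼ(x,y)|² integrable over ℝⁿ×(0,∞) for j = 1,2, and define B_σ(w,w') := ∫_{ℝⁿ×(0,∞)} y^{1−2s} ( σ(x)·∇_x w(x,y)·∇_x w'(x,y) + ∂_y w(x,y)·∂_y w'(x,y) ) dx dy. If B_{σ₂}(ũ₂, ũ₂ − ũ₁) = 0, then B_{σ₁}(ũ₁,ũ₁) ≥ B_{σ₂}(ũ₂,ũ₂). -/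
open MeasureTheory
open scoped RealInnerProductSpace

section Aux

variable {n : ℕ}

/-- x-gradient of a function on `ℝⁿ × ℝ`, written via the full derivative. -/
noncomputable def gp (n : ℕ) (w : EuclideanSpace ℝ (Fin n) × ℝ → ℝ)
    (p : EuclideanSpace ℝ (Fin n) × ℝ) : EuclideanSpace ℝ (Fin n) :=
  (InnerProductSpace.toDual ℝ (EuclideanSpace ℝ (Fin n))).symm
    ((fderiv ℝ w p).comp (ContinuousLinearMap.inl ℝ (EuclideanSpace ℝ (Fin n)) ℝ))

/-- y-derivative of a function on `ℝⁿ × ℝ`, written via the full derivative. -/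
noncomputable def dp (n : ℕ) (w : EuclideanSpace ℝ (Fin n) × ℝ → ℝ)
    (p : EuclideanSpace ℝ (Fin n) × ℝ) : ℝ :=
  fderiv ℝ w p ((0 : EuclideanSpace ℝ (Fin n)), (1 : ℝ))

theorem gradient_partial {w : EuclideanSpace ℝ (Fin n) × ℝ → ℝ}
    (hw : Differentiable ℝ w) (p : EuclideanSpace ℝ (Fin n) × ℝ) :
    gradient (fun x => w (x, p.2)) p.1 = gp n w p := by
  have h : HasFDerivAt (fun x => w (x, p.2))
      ((fderiv ℝ w p).comp (ContinuousLinearMap.inl ℝ (EuclideanSpace ℝ (Fin n)) ℝ)) p.1 :=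
    (hw p).hasFDerivAt.comp p.1 (hasFDerivAt_prodMk_left p.1 p.2)
  rw [gradient, gp, h.fderiv]

theorem deriv_partial {w : EuclideanSpace ℝ (Fin n) × ℝ → ℝ}
    (hw : Differentiable ℝ w) (p : EuclideanSpace ℝ (Fin n) × ℝ) :
    deriv (fun y => w (p.1, y)) p.2 = dp n w p := by
  have h2 : HasDerivAt (fun y : ℝ => ((p.1 : EuclideanSpace ℝ (Fin n)), y))
      ((0 : EuclideanSpace ℝ (Fin n)), (1 : ℝ)) p.2 :=
    (hasDerivAt_const _ _).prodMk (hasDerivAt_id _)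
  exact ((hw p).hasFDerivAt.comp_hasDerivAt p.2 h2).deriv

theorem measurable_gp (w : EuclideanSpace ℝ (Fin n) × ℝ → ℝ) : Measurable (gp n w) := by
  have hT : Continuous fun L : (EuclideanSpace ℝ (Fin n) × ℝ) →L[ℝ] ℝ =>
      (InnerProductSpace.toDual ℝ (EuclideanSpace ℝ (Fin n))).symm
        (L.comp (ContinuousLinearMap.inl ℝ (EuclideanSpace ℝ (Fin n)) ℝ)) :=
    (InnerProductSpace.toDual ℝ (EuclideanSpace ℝ (Fin n))).symm.continuous.comp
      (((ContinuousLinearMap.compL ℝ (EuclideanSpace ℝ (Fin n))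
        (EuclideanSpace ℝ (Fin n) × ℝ) ℝ).flip
        (ContinuousLinearMap.inl ℝ (EuclideanSpace ℝ (Fin n)) ℝ)).continuous)
  exact hT.measurable.comp (measurable_fderiv ℝ w)

theorem measurable_dp (w : EuclideanSpace ℝ (Fin n) × ℝ → ℝ) : Measurable (dp n w) :=
  measurable_fderiv_apply_const ℝ w _

theorem gp_sub {w w' : EuclideanSpace ℝ (Fin n) × ℝ → ℝ}
    (hw : Differentiable ℝ w) (hw' : Differentiable ℝ w')
    (p : EuclideanSpace ℝ (Fin n) × ℝ) :
    gp n (w - w') p = gp n w p - gp n w' p := by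
  simp only [gp]
  rw [show fderiv ℝ (w - w') p = fderiv ℝ w p - fderiv ℝ w' p from fderiv_sub (hw p) (hw' p),
    ContinuousLinearMap.sub_comp, map_sub]

theorem dp_sub {w w' : EuclideanSpace ℝ (Fin n) × ℝ → ℝ}
    (hw : Differentiable ℝ w) (hw' : Differentiable ℝ w')
    (p : EuclideanSpace ℝ (Fin n) × ℝ) :
    dp n (w - w') p = dp n w p - dp n w' p := by
  simp only [dp]
  rw [show fderiv ℝ (w - w') p = fderiv ℝ w p - fderiv ℝ w' p from fderiv_sub (hw p) (hw' p),
    ContinuousLinearMap.sub_apply]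

/-- The integrand of the weighted form, in terms of `gp` and `dp`. -/
noncomputable def wfi (n : ℕ) (s : ℝ) (σ : EuclideanSpace ℝ (Fin n) → ℝ)
    (w w' : EuclideanSpace ℝ (Fin n) × ℝ → ℝ) (p : EuclideanSpace ℝ (Fin n) × ℝ) : ℝ :=
  p.2 ^ (1 - 2 * s) * (σ p.1 * ⟪gp n w p, gp n w' p⟫ + dp n w p * dp n w' p)

theorem weightedForm_eq {s : ℝ} {σ : EuclideanSpace ℝ (Fin n) → ℝ}
    {w w' : EuclideanSpace ℝ (Fin n) × ℝ → ℝ}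
    (hw : Differentiable ℝ w) (hw' : Differentiable ℝ w') :
    weightedForm n s σ w w' =
      ∫ p in (Set.univ ×ˢ Set.Ioi (0 : ℝ) : Set (EuclideanSpace ℝ (Fin n) × ℝ)),
        wfi n s σ w w' p := by
  unfold weightedForm
  refine integral_congr_ae (Filter.Eventually.of_forall fun p => ?_)
  simp only [gradient_partial hw p, gradient_partial hw' p, deriv_partial hw p,
    deriv_partial hw' p, wfi]

theorem measurableSet_half (n : ℕ) :
    MeasurableSet (Set.univ ×ˢ Set.Ioi (0 : ℝ) : Set (EuclideanSpace ℝ (Fin n) × ℝ)) :=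
  MeasurableSet.univ.prod measurableSet_Ioi

theorem aemeasurable_rpow_snd (n : ℕ) (c : ℝ) :
    AEMeasurable (fun p : EuclideanSpace ℝ (Fin n) × ℝ => p.2 ^ c)
      (volume.restrict (Set.univ ×ˢ Set.Ioi (0 : ℝ))) := by
  refine ContinuousOn.aemeasurable ?_ (measurableSet_half n)
  intro p hp
  have hp2 : (0 : ℝ) < p.2 := hp.2
  exact ((Real.continuousAt_rpow_const p.2 c (Or.inl hp2.ne')).comp
    continuous_snd.continuousAt).continuousWithinAt

theorem aesm_wfi {s : ℝ} {σ : EuclideanSpace ℝ (Fin n) → ℝ} (hσm : Measurable σ)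
    (w w' : EuclideanSpace ℝ (Fin n) × ℝ → ℝ) :
    AEStronglyMeasurable (wfi n s σ w w')
      (volume.restrict (Set.univ ×ˢ Set.Ioi (0 : ℝ))) := by
  refine AEMeasurable.aestronglyMeasurable ?_
  refine (aemeasurable_rpow_snd n (1 - 2 * s)).mul (Measurable.aemeasurable ?_)
  exact ((hσm.comp measurable_fst).mul
      ((measurable_gp w).inner (measurable_gp w'))).add
    ((measurable_dp w).mul (measurable_dp w'))

theorem integrable_wfi {s : ℝ} {σ : EuclideanSpace ℝ (Fin n) → ℝ}
    {w w' : EuclideanSpace ℝ (Fin n) × ℝ → ℝ}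
    (hσm : Measurable σ) {C : ℝ} (hC : 1 ≤ C) (hσb : ∀ x, |σ x| ≤ C)
    (hw : IntegrableOn (fun p : EuclideanSpace ℝ (Fin n) × ℝ =>
        p.2 ^ (1 - 2 * s) * (‖gp n w p‖ ^ 2 + (dp n w p) ^ 2))
      (Set.univ ×ˢ Set.Ioi (0 : ℝ)))
    (hw' : IntegrableOn (fun p : EuclideanSpace ℝ (Fin n) × ℝ =>
        p.2 ^ (1 - 2 * s) * (‖gp n w' p‖ ^ 2 + (dp n w' p) ^ 2))
      (Set.univ ×ˢ Set.Ioi (0 : ℝ))) :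
    IntegrableOn (wfi n s σ w w') (Set.univ ×ˢ Set.Ioi (0 : ℝ)) := by
  have hC0 : (0 : ℝ) < C := lt_of_lt_of_le one_pos hC
  refine Integrable.mono' ((hw.add hw').const_mul (C / 2)) (aesm_wfi hσm w w') ?_
  refine (ae_restrict_iff' (measurableSet_half n)).2 (Filter.Eventually.of_forall fun p hp => ?_)
  have hy : (0 : ℝ) ≤ p.2 := le_of_lt hp.2
  have ht : (0 : ℝ) ≤ p.2 ^ (1 - 2 * s) := Real.rpow_nonneg hy _
  set A := ‖gp n w p‖
  set B := ‖gp n w' p‖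
  set c := dp n w p
  set d := dp n w' p
  have hI : |⟪gp n w p, gp n w' p⟫| ≤ A * B := abs_real_inner_le_norm _ _
  have hkey : |σ p.1 * ⟪gp n w p, gp n w' p⟫ + c * d| ≤ C / 2 * ((A ^ 2 + c ^ 2) + (B ^ 2 + d ^ 2)) := by
    have h1 : |σ p.1 * ⟪gp n w p, gp n w' p⟫ + c * d| ≤ C * (A * B) + |c| * |d| := by
      refine (abs_add_le _ _).trans (add_le_add ?_ (le_of_eq (abs_mul _ _)))
      rw [abs_mul]
      exact mul_le_mul (hσb p.1) hI (abs_nonneg _) hC0.le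
    refine h1.trans ?_
    nlinarith [sq_nonneg (A - B), sq_nonneg (|c| - |d|), sq_abs c, sq_abs d,
      mul_nonneg hC0.le (sq_nonneg (A - B)), abs_nonneg c, abs_nonneg d,
      mul_nonneg (abs_nonneg c) (abs_nonneg d),
      mul_le_mul_of_nonneg_right hC (mul_nonneg (abs_nonneg c) (abs_nonneg d)),
      mul_le_mul_of_nonneg_right hC (add_nonneg (sq_nonneg c) (sq_nonneg d))]
  have : ‖wfi n s σ w w' p‖ = p.2 ^ (1 - 2 * s) * |σ p.1 * ⟪gp n w p, gp n w' p⟫ + c * d| := by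
    rw [wfi, Real.norm_eq_abs, abs_mul, abs_of_nonneg ht]
  rw [this]
  calc p.2 ^ (1 - 2 * s) * |σ p.1 * ⟪gp n w p, gp n w' p⟫ + c * d|
      ≤ p.2 ^ (1 - 2 * s) * (C / 2 * ((A ^ 2 + c ^ 2) + (B ^ 2 + d ^ 2))) :=
        mul_le_mul_of_nonneg_left hkey ht
    _ = C / 2 * (p.2 ^ (1 - 2 * s) * (A ^ 2 + c ^ 2) + p.2 ^ (1 - 2 * s) * (B ^ 2 + d ^ 2)) := by
        ring

end Aux

/-- extension-problem formulation of Corollary 3.2: a pointwise a.e.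
ordering σ₁ ≥ σ₂ implies the ordering of the energies. -/
theorem stmt_8 (n : ℕ) (hn : 1 ≤ n) (s lam : ℝ) (hs0 : 0 < s) (hs1 : s < 1)
    (hlam : lam ∈ Set.Ioo (0 : ℝ) 1)
    (Ω : Set (EuclideanSpace ℝ (Fin n))) (hΩopen : IsOpen Ω)
    (hΩbdd : Bornology.IsBounded Ω)
    (σ₁ σ₂ : EuclideanSpace ℝ (Fin n) → ℝ)
    (hσ₁m : Measurable σ₁) (hσ₂m : Measurable σ₂)
    (hσ₁ : ∀ x, lam ≤ σ₁ x ∧ σ₁ x ≤ lam⁻¹)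
    (hσ₂ : ∀ x, lam ≤ σ₂ x ∧ σ₂ x ≤ lam⁻¹)
    (hσeq : ∀ x ∉ Ω, σ₁ x = σ₂ x)
    (u₁ u₂ : EuclideanSpace ℝ (Fin n) × ℝ → ℝ)
    (hu₁ : Differentiable ℝ u₁) (hu₂ : Differentiable ℝ u₂)
    (hint₁ : IntegrableOn (fun p : EuclideanSpace ℝ (Fin n) × ℝ =>
        p.2 ^ (1 - 2 * s) *
          (‖gradient (fun x => u₁ (x, p.2)) p.1‖ ^ 2 + (deriv (fun y => u₁ (p.1, y)) p.2) ^ 2))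
      (Set.univ ×ˢ Set.Ioi (0 : ℝ)))
    (hint₂ : IntegrableOn (fun p : EuclideanSpace ℝ (Fin n) × ℝ =>
        p.2 ^ (1 - 2 * s) *
          (‖gradient (fun x => u₂ (x, p.2)) p.1‖ ^ 2 + (deriv (fun y => u₂ (p.1, y)) p.2) ^ 2))
      (Set.univ ×ˢ Set.Ioi (0 : ℝ)))
    (hmono : ∀ᵐ x : EuclideanSpace ℝ (Fin n), σ₂ x ≤ σ₁ x)
    (horth₂ : weightedForm n s σ₂ u₂ (u₂ - u₁) = 0) :
    weightedForm n s σ₂ u₂ u₂ ≤ weightedForm n s σ₁ u₁ u₁ := by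
  have hlam0 : (0 : ℝ) < lam := hlam.1
  have hinv0 : (0 : ℝ) < lam⁻¹ := inv_pos.2 hlam0
  have hC1 : (1 : ℝ) ≤ lam⁻¹ := by
    have h := mul_inv_cancel₀ hlam0.ne'
    nlinarith [hlam.2]
  have hσ₁b : ∀ x, |σ₁ x| ≤ lam⁻¹ := fun x =>
    abs_le.2 ⟨by nlinarith [(hσ₁ x).1], (hσ₁ x).2⟩
  have hσ₂b : ∀ x, |σ₂ x| ≤ lam⁻¹ := fun x =>
    abs_le.2 ⟨by nlinarith [(hσ₂ x).1], (hσ₂ x).2⟩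
  -- rewrite the integrability hypotheses via gp / dp
  have e₁ : (fun p : EuclideanSpace ℝ (Fin n) × ℝ =>
      p.2 ^ (1 - 2 * s) *
        (‖gradient (fun x => u₁ (x, p.2)) p.1‖ ^ 2 + (deriv (fun y => u₁ (p.1, y)) p.2) ^ 2)) =
      fun p => p.2 ^ (1 - 2 * s) * (‖gp n u₁ p‖ ^ 2 + (dp n u₁ p) ^ 2) :=
    funext fun p => by rw [gradient_partial hu₁, deriv_partial hu₁]
  have e₂ : (fun p : EuclideanSpace ℝ (Fin n) × ℝ =>
      p.2 ^ (1 - 2 * s) *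
        (‖gradient (fun x => u₂ (x, p.2)) p.1‖ ^ 2 + (deriv (fun y => u₂ (p.1, y)) p.2) ^ 2)) =
      fun p => p.2 ^ (1 - 2 * s) * (‖gp n u₂ p‖ ^ 2 + (dp n u₂ p) ^ 2) :=
    funext fun p => by rw [gradient_partial hu₂, deriv_partial hu₂]
  rw [e₁] at hint₁
  rw [e₂] at hint₂
  -- integrability of all relevant integrands
  have I111 : IntegrableOn (wfi n s σ₁ u₁ u₁) (Set.univ ×ˢ Set.Ioi (0 : ℝ)) :=
    integrable_wfi hσ₁m hC1 hσ₁b hint₁ hint₁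
  have I211 : IntegrableOn (wfi n s σ₂ u₁ u₁) (Set.univ ×ˢ Set.Ioi (0 : ℝ)) :=
    integrable_wfi hσ₂m hC1 hσ₂b hint₁ hint₁
  have I212 : IntegrableOn (wfi n s σ₂ u₁ u₂) (Set.univ ×ˢ Set.Ioi (0 : ℝ)) :=
    integrable_wfi hσ₂m hC1 hσ₂b hint₁ hint₂
  have I221 : IntegrableOn (wfi n s σ₂ u₂ u₁) (Set.univ ×ˢ Set.Ioi (0 : ℝ)) :=
    integrable_wfi hσ₂m hC1 hσ₂b hint₂ hint₁
  have I222 : IntegrableOn (wfi n s σ₂ u₂ u₂) (Set.univ ×ˢ Set.Ioi (0 : ℝ)) :=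
    integrable_wfi hσ₂m hC1 hσ₂b hint₂ hint₂
  -- the orthogonality relation gives J σ₂ u₂ u₂ = J σ₂ u₂ u₁
  rw [weightedForm_eq hu₂ (show Differentiable ℝ (u₂ - u₁) from fun p => (hu₂ p).sub (hu₁ p))] at horth₂
  have hsplit : wfi n s σ₂ u₂ (u₂ - u₁) =
      fun p => wfi n s σ₂ u₂ u₂ p - wfi n s σ₂ u₂ u₁ p := funext fun p => by
    simp only [wfi, gp_sub hu₂ hu₁, dp_sub hu₂ hu₁, inner_sub_right]
    ring
  rw [hsplit, integral_sub I222 I221] at horth₂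
  have key1 : ∫ p in (Set.univ ×ˢ Set.Ioi (0 : ℝ)), wfi n s σ₂ u₂ u₂ p =
      ∫ p in (Set.univ ×ˢ Set.Ioi (0 : ℝ)), wfi n s σ₂ u₂ u₁ p := by linarith
  -- symmetry of the form
  have hsym : ∫ p in (Set.univ ×ˢ Set.Ioi (0 : ℝ)), wfi n s σ₂ u₁ u₂ p =
      ∫ p in (Set.univ ×ˢ Set.Ioi (0 : ℝ)), wfi n s σ₂ u₂ u₁ p := by
    have : wfi n s σ₂ u₁ u₂ = wfi n s σ₂ u₂ u₁ := funext fun p => by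
      simp only [wfi]
      rw [real_inner_comm]
      ring
    rw [this]
  -- nonnegativity of the quadratic form at u₁ - u₂
  have hnn : 0 ≤ ∫ p in (Set.univ ×ˢ Set.Ioi (0 : ℝ)), wfi n s σ₂ (u₁ - u₂) (u₁ - u₂) p := by
    refine setIntegral_nonneg (measurableSet_half n) fun p hp => ?_
    have hy : (0 : ℝ) ≤ p.2 := le_of_lt hp.2
    have hσ : (0 : ℝ) ≤ σ₂ p.1 := le_trans hlam0.le (hσ₂ p.1).1
    refine mul_nonneg (Real.rpow_nonneg hy _) (add_nonneg (mul_nonneg hσ ?_) (mul_self_nonneg _))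
    exact real_inner_self_nonneg
  have hexp : wfi n s σ₂ (u₁ - u₂) (u₁ - u₂) =
      fun p => wfi n s σ₂ u₁ u₁ p - wfi n s σ₂ u₁ u₂ p - wfi n s σ₂ u₂ u₁ p +
        wfi n s σ₂ u₂ u₂ p := funext fun p => by
    simp only [wfi, gp_sub hu₁ hu₂, dp_sub hu₁ hu₂, inner_sub_left, inner_sub_right]
    ring
  have h2' : Integrable (fun p => wfi n s σ₂ u₁ u₁ p - wfi n s σ₂ u₁ u₂ p)
      (volume.restrict (Set.univ ×ˢ Set.Ioi (0 : ℝ))) := I211.sub I212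
  have h3' : Integrable (fun p => wfi n s σ₂ u₁ u₁ p - wfi n s σ₂ u₁ u₂ p - wfi n s σ₂ u₂ u₁ p)
      (volume.restrict (Set.univ ×ˢ Set.Ioi (0 : ℝ))) := h2'.sub I221
  have B3 : ∫ p in (Set.univ ×ˢ Set.Ioi (0 : ℝ)),
      (wfi n s σ₂ u₁ u₁ p - wfi n s σ₂ u₁ u₂ p) =
      (∫ p in (Set.univ ×ˢ Set.Ioi (0 : ℝ)), wfi n s σ₂ u₁ u₁ p) -
        ∫ p in (Set.univ ×ˢ Set.Ioi (0 : ℝ)), wfi n s σ₂ u₁ u₂ p := integral_sub I211 I212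
  have B2 : ∫ p in (Set.univ ×ˢ Set.Ioi (0 : ℝ)),
      (wfi n s σ₂ u₁ u₁ p - wfi n s σ₂ u₁ u₂ p - wfi n s σ₂ u₂ u₁ p) =
      (∫ p in (Set.univ ×ˢ Set.Ioi (0 : ℝ)),
        (wfi n s σ₂ u₁ u₁ p - wfi n s σ₂ u₁ u₂ p)) -
        ∫ p in (Set.univ ×ˢ Set.Ioi (0 : ℝ)), wfi n s σ₂ u₂ u₁ p := integral_sub h2' I221
  have B1 : ∫ p in (Set.univ ×ˢ Set.Ioi (0 : ℝ)),
      (wfi n s σ₂ u₁ u₁ p - wfi n s σ₂ u₁ u₂ p - wfi n s σ₂ u₂ u₁ p + wfi n s σ₂ u₂ u₂ p) =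
      (∫ p in (Set.univ ×ˢ Set.Ioi (0 : ℝ)),
        (wfi n s σ₂ u₁ u₁ p - wfi n s σ₂ u₁ u₂ p - wfi n s σ₂ u₂ u₁ p)) +
        ∫ p in (Set.univ ×ˢ Set.Ioi (0 : ℝ)), wfi n s σ₂ u₂ u₂ p := integral_add h3' I222
  rw [hexp] at hnn
  simp only [] at hnn
  rw [B1, B2, B3] at hnn
  -- monotonicity in σ
  have hmono' : ∀ᵐ p : EuclideanSpace ℝ (Fin n) × ℝ, σ₂ p.1 ≤ σ₁ p.1 := by
    rw [MeasureTheory.Measure.volume_eq_prod]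
    exact MeasureTheory.Measure.quasiMeasurePreserving_fst.ae hmono
  have hle : (fun p => wfi n s σ₂ u₁ u₁ p) ≤ᵐ[volume.restrict (Set.univ ×ˢ Set.Ioi (0 : ℝ))]
      fun p => wfi n s σ₁ u₁ u₁ p := by
    filter_upwards [ae_restrict_of_ae hmono', ae_restrict_mem (measurableSet_half n)]
      with p h1 h2
    have hy : (0 : ℝ) ≤ p.2 := le_of_lt h2.2
    have ht : (0 : ℝ) ≤ p.2 ^ (1 - 2 * s) := Real.rpow_nonneg hy _
    have hg : (0 : ℝ) ≤ ⟪gp n u₁ p, gp n u₁ p⟫ := real_inner_self_nonneg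
    simp only [wfi]
    exact mul_le_mul_of_nonneg_left
      (add_le_add (mul_le_mul_of_nonneg_right h1 hg) le_rfl) ht
  have hmonoJ : ∫ p in (Set.univ ×ˢ Set.Ioi (0 : ℝ)), wfi n s σ₂ u₁ u₁ p ≤
      ∫ p in (Set.univ ×ˢ Set.Ioi (0 : ℝ)), wfi n s σ₁ u₁ u₁ p :=
    integral_mono_ae I211 I111 hle
  rw [weightedForm_eq hu₂ hu₂, weightedForm_eq hu₁ hu₁]
  linarith
end

section
/- Let 0 < s < 1/2, k > 0, and b ∈ (0,1). Let γ : ℝ → ℝ be a continuous function satisfying 0 ≤ γ(y) ≤ b for all y, γ(y) = 0 for y ∉ [0, (2−b)/(1−b)], γ(y) = b for all y ∈ [1, 1/(1−b)], and ∫₀^∞ γ(y) dy = b/(1−b). Then (b·k^{1−2s})/(1−b) < ∫₀^∞ (y+k)^{1−2s}·γ(y) dy < (b·k^{1−2s})/(1−b) · (1 + (2−b)/(k(1−b)))^{1−2s}. -/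
open MeasureTheory

/-- two-sided estimate for `I_{b,k}` from Appendix A, case `s ∈ (0, 1/2)`. -/
theorem stmt_11 (s k b : ℝ) (hs0 : 0 < s) (hs : s < 1 / 2) (hk : 0 < k)
    (hb : b ∈ Set.Ioo (0 : ℝ) 1)
    (γ : ℝ → ℝ) (hγcont : Continuous γ)
    (hγrange : ∀ y : ℝ, 0 ≤ γ y ∧ γ y ≤ b)
    (hγsupp : ∀ y : ℝ, y ∉ Set.Icc (0 : ℝ) ((2 - b) / (1 - b)) → γ y = 0)
    (hγplateau : ∀ y ∈ Set.Icc (1 : ℝ) (1 / (1 - b)), γ y = b)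
    (hγint : (∫ y in Set.Ioi (0 : ℝ), γ y) = b / (1 - b)) :
    b * k ^ (1 - 2 * s) / (1 - b)
        < (∫ y in Set.Ioi (0 : ℝ), (y + k) ^ (1 - 2 * s) * γ y) ∧
      (∫ y in Set.Ioi (0 : ℝ), (y + k) ^ (1 - 2 * s) * γ y)
        < b * k ^ (1 - 2 * s) / (1 - b) *
            (1 + (2 - b) / (k * (1 - b))) ^ (1 - 2 * s) := by
  obtain ⟨hb0, hb1⟩ := hb
  have h1b : 0 < 1 - b := by linarith
  set p : ℝ := 1 - 2 * s with hpdef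
  have hp : 0 < p := by rw [hpdef]; linarith
  set M : ℝ := (2 - b) / (1 - b) with hMdef
  have hM0 : 0 < M := div_pos (by linarith) h1b
  have h1div : 1 < 1 / (1 - b) := by rw [lt_div_iff₀ h1b]; linarith
  have hdivM : 1 / (1 - b) < M := by
    rw [hMdef, div_lt_div_iff₀ h1b h1b]
    nlinarith
  -- continuity and integrability
  have hrc : Continuous (fun y : ℝ => (y + k) ^ p) :=
    (continuous_id.add continuous_const).rpow_const (fun x => Or.inr hp.le)
  have hγint' : Integrable γ :=
    hγcont.integrable_of_hasCompactSupport
      (HasCompactSupport.intro isCompact_Icc hγsupp)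
  have hfs : ∀ x : ℝ, x ∉ Set.Icc (0 : ℝ) M → (x + k) ^ p * γ x = 0 := fun x hx => by
    rw [hγsupp x hx, mul_zero]
  have hfint : Integrable (fun y : ℝ => (y + k) ^ p * γ y) :=
    (hrc.mul hγcont).integrable_of_hasCompactSupport
      (HasCompactSupport.intro isCompact_Icc hfs)
  have hplateau_meas : 0 < volume (Set.Icc (1 : ℝ) (1 / (1 - b))) := by
    rw [Real.volume_Icc]
    exact ENNReal.ofReal_pos.mpr (by linarith)
  have hplateau_sub : Set.Icc (1 : ℝ) (1 / (1 - b)) ⊆ Set.Ioi (0 : ℝ) := fun y hy => by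
    have := hy.1; simp only [Set.mem_Ioi]; linarith
  -- lower strict inequality
  have hlow : 0 < ∫ y in Set.Ioi (0 : ℝ), ((y + k) ^ p * γ y - k ^ p * γ y) := by
    have hnn : 0 ≤ᵐ[volume.restrict (Set.Ioi (0 : ℝ))]
        fun y : ℝ => (y + k) ^ p * γ y - k ^ p * γ y := by
      refine (ae_restrict_iff' measurableSet_Ioi).mpr (ae_of_all _ fun y hy => ?_)
      have hy0 : 0 < y := hy
      have h1 : k ^ p ≤ (y + k) ^ p := Real.rpow_le_rpow hk.le (by linarith) hp.le
      have hg := (hγrange y).1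
      show (0:ℝ) ≤ (y + k) ^ p * γ y - k ^ p * γ y
      nlinarith
    have hint : IntegrableOn (fun y : ℝ => (y + k) ^ p * γ y - k ^ p * γ y)
        (Set.Ioi (0 : ℝ)) volume :=
      (hfint.sub (hγint'.const_mul _)).integrableOn
    rw [setIntegral_pos_iff_support_of_nonneg_ae hnn hint]
    refine lt_of_lt_of_le hplateau_meas (measure_mono fun y hy => ?_)
    refine ⟨?_, hplateau_sub hy⟩
    have hy1 := hy.1
    have h1 : k ^ p < (y + k) ^ p := Real.rpow_lt_rpow hk.le (by linarith) hp
    simp only [Function.mem_support, hγplateau y hy]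
    nlinarith
  -- upper strict inequality
  have hupp : 0 < ∫ y in Set.Ioi (0 : ℝ), ((M + k) ^ p * γ y - (y + k) ^ p * γ y) := by
    have hnn : 0 ≤ᵐ[volume.restrict (Set.Ioi (0 : ℝ))]
        fun y : ℝ => (M + k) ^ p * γ y - (y + k) ^ p * γ y := by
      refine (ae_restrict_iff' measurableSet_Ioi).mpr (ae_of_all _ fun y hy => ?_)
      have hy0 : 0 < y := hy
      by_cases hyM : y ≤ M
      · have h1 : (y + k) ^ p ≤ (M + k) ^ p :=
          Real.rpow_le_rpow (by linarith) (by linarith) hp.le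
        have hg := (hγrange y).1
        show (0:ℝ) ≤ (M + k) ^ p * γ y - (y + k) ^ p * γ y
        nlinarith
      · have h0 : γ y = 0 := hγsupp y (fun h => hyM h.2)
        show (0:ℝ) ≤ (M + k) ^ p * γ y - (y + k) ^ p * γ y
        rw [h0]; simp
    have hint : IntegrableOn (fun y : ℝ => (M + k) ^ p * γ y - (y + k) ^ p * γ y)
        (Set.Ioi (0 : ℝ)) volume :=
      ((hγint'.const_mul _).sub hfint).integrableOn
    rw [setIntegral_pos_iff_support_of_nonneg_ae hnn hint]
    refine lt_of_lt_of_le hplateau_meas (measure_mono fun y hy => ?_)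
    refine ⟨?_, hplateau_sub hy⟩
    have hy1 := hy.1
    have hy2 := hy.2
    have h1 : (y + k) ^ p < (M + k) ^ p :=
      Real.rpow_lt_rpow (by linarith) (by linarith) hp
    simp only [Function.mem_support, hγplateau y hy]
    nlinarith
  -- split integrals
  have hsub1 : (∫ y in Set.Ioi (0 : ℝ), ((y + k) ^ p * γ y - k ^ p * γ y))
      = (∫ y in Set.Ioi (0 : ℝ), (y + k) ^ p * γ y) - k ^ p * (b / (1 - b)) := by
    rw [integral_sub hfint.integrableOn ((hγint'.const_mul _).integrableOn),
      MeasureTheory.integral_const_mul, hγint]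
  have hsub2 : (∫ y in Set.Ioi (0 : ℝ), ((M + k) ^ p * γ y - (y + k) ^ p * γ y))
      = (M + k) ^ p * (b / (1 - b)) - (∫ y in Set.Ioi (0 : ℝ), (y + k) ^ p * γ y) := by
    rw [integral_sub ((hγint'.const_mul _).integrableOn) hfint.integrableOn,
      MeasureTheory.integral_const_mul, hγint]
  -- value identities
  have hkp : (0 : ℝ) < k ^ p := Real.rpow_pos_of_pos hk p
  have hval : (M + k) ^ p * (b / (1 - b))
      = b * k ^ p / (1 - b) * (1 + (2 - b) / (k * (1 - b))) ^ p := by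
    have h1 : 1 + (2 - b) / (k * (1 - b)) = (M + k) / k := by
      rw [hMdef]
      field_simp
      ring
    rw [h1, div_eq_mul_inv (M + k) k,
      Real.mul_rpow (by positivity) (by positivity),
      Real.inv_rpow hk.le]
    field_simp
  constructor
  · have : b * k ^ p / (1 - b) = k ^ p * (b / (1 - b)) := by ring
    rw [this]
    linarith [hsub1 ▸ hlow]
  · rw [← hval]
    linarith [hsub2 ▸ hupp]
end
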